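/- arXiv:1801.06636 — 7 statements merged into one kernel-verified Lean document; each statement's English description precedes it below -/
import Mathlib

section
/- Let M be a nonempty compact topological space and f = (f₁,f₂), g = (g₁,g₂) : M → ℝ² continuous. For (a,b) with 0 < a < 1 and b ∈ ℝ, set N(a,b) := sup over x ∈ M of |f*₍a,b₎(x) − g*₍a,b₎(x)|, and set ‖f − g‖∞ := sup over x ∈ M of max(|f₁(x) − g₁(x)|, |f₂(x) − g₂(x)|). Then ‖f − g‖∞ = sup over all (a,b) ∈ ]0,1[ × ℝ of N(a,b) = sup over all b ∈ ℝ of N(1/2, b). -/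
/-
At `a = 1/2` the normalized function is simply `max (f₁ - b) (f₂ + b)`. On a compact space,
a very negative `b` makes the first entry win for both `f` and `g` simultaneously, so the
difference of the filtered functions is exactly `f₁ - g₁`; a very positive `b` gives `f₂ - g₂`
in the same way. Hence the sup over `b` already reaches `‖f − g‖∞`. Conversely every
`f*_(a,b) − g*_(a,b)` is pointwise bounded by `max |f₁ - g₁| |f₂ - g₂|`, since `max` is
1-Lipschitz for the sup norm and the scaling factors `min a (1 - a) / a` and
`min a (1 - a) / (1 - a)` are at most `1`.
-/

/-- The normalized filtering function `f*_(a,b)` associated with the pair `(a,b)`. -/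
noncomputable def fStar {M : Type*} (f₁ f₂ : M → ℝ) (a b : ℝ) (x : M) : ℝ :=
  min a (1 - a) * max ((f₁ x - b) / a) ((f₂ x + b) / (1 - a))

open Set

theorem ciSup_eq_ciSup_ciSup_of_le_of_exists_le {α ι κ : Type*}
    [ConditionallyCompleteLattice α] [Nonempty ι] [Nonempty κ] {F : ι → κ → α} {D : κ → α}
    (hD : BddAbove (range D))
    (hle : ∀ i x, F i x ≤ D x) (hex : ∀ x, ∃ i, D x ≤ F i x) :
    ⨆ x, D x = ⨆ i, ⨆ x, F i x := by
  have hF : ∀ i, ⨆ x, F i x ≤ ⨆ x, D x := fun i =>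
    ciSup_le fun x => (hle i x).trans (le_ciSup hD x)
  refine le_antisymm (ciSup_le fun x => ?_) (ciSup_le hF)
  obtain ⟨i, hi⟩ := hex x
  have hFi : BddAbove (range (F i)) :=
    ⟨⨆ x, D x, forall_mem_range.2 fun y => (hle i y).trans (le_ciSup hD y)⟩
  exact hi.trans ((le_ciSup hFi x).trans (le_ciSup ⟨_, forall_mem_range.2 hF⟩ i))

section fStar

variable {M : Type*} (f₁ f₂ g₁ g₂ : M → ℝ)

theorem abs_fStar_sub_fStar_le {a : ℝ} (ha : 0 < a) (ha1 : a < 1) (b : ℝ) (x : M) :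
    |fStar f₁ f₂ a b x - fStar g₁ g₂ a b x| ≤ max |f₁ x - g₁ x| |f₂ x - g₂ x| := by
  have ha' : 0 < 1 - a := sub_pos.2 ha1
  set c := min a (1 - a)
  have hc : 0 < c := lt_min ha ha'
  calc |fStar f₁ f₂ a b x - fStar g₁ g₂ a b x|
      = c * |max ((f₁ x - b) / a) ((f₂ x + b) / (1 - a))
          - max ((g₁ x - b) / a) ((g₂ x + b) / (1 - a))| := by
        rw [fStar, fStar, ← mul_sub, abs_mul, abs_of_pos hc]
    _ ≤ c * max |(f₁ x - b) / a - (g₁ x - b) / a|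
          |(f₂ x + b) / (1 - a) - (g₂ x + b) / (1 - a)| := by
        gcongr
        exact abs_max_sub_max_le_max _ _ _ _
    _ = max (c / a * |f₁ x - g₁ x|) (c / (1 - a) * |f₂ x - g₂ x|) := by
        rw [mul_max_of_nonneg _ _ hc.le, ← sub_div, ← sub_div, abs_div, abs_div, abs_of_pos ha,
          abs_of_pos ha', sub_sub_sub_cancel_right, add_sub_add_right_eq_sub]
        congr 1 <;> ring
    _ ≤ max |f₁ x - g₁ x| |f₂ x - g₂ x| :=
        max_le_max (mul_le_of_le_one_left (abs_nonneg _) ((div_le_one ha).2 (min_le_left _ _)))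
          (mul_le_of_le_one_left (abs_nonneg _) ((div_le_one ha').2 (min_le_right _ _)))

theorem fStar_half (b : ℝ) (x : M) :
    fStar f₁ f₂ (1 / 2) b x = max (f₁ x - b) (f₂ x + b) := by
  rw [fStar, show (1 : ℝ) - 1 / 2 = 1 / 2 by norm_num, min_self,
    mul_max_of_nonneg _ _ (by norm_num : (0 : ℝ) ≤ 1 / 2)]
  congr 1 <;> field_simp

variable {f₁ f₂ g₁ g₂}

theorem exists_fStar_half_sub_fStar_half_eq_left (hf : BddBelow (range (f₁ - f₂)))
    (hg : BddBelow (range (g₁ - g₂))) :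
    ∃ b, ∀ x, fStar f₁ f₂ (1 / 2) b x - fStar g₁ g₂ (1 / 2) b x = f₁ x - g₁ x := by
  obtain ⟨m, hm⟩ := hf
  obtain ⟨n, hn⟩ := hg
  refine ⟨min m n / 2, fun x => ?_⟩
  have hfx : m ≤ f₁ x - f₂ x := hm ⟨x, rfl⟩
  have hgx : n ≤ g₁ x - g₂ x := hn ⟨x, rfl⟩
  have hf : f₂ x + min m n / 2 ≤ f₁ x - min m n / 2 := by linarith [min_le_left m n]
  have hg : g₂ x + min m n / 2 ≤ g₁ x - min m n / 2 := by linarith [min_le_right m n]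
  rw [fStar_half, fStar_half, max_eq_left hf, max_eq_left hg]
  ring

theorem exists_fStar_half_sub_fStar_half_eq_right (hf : BddAbove (range (f₁ - f₂)))
    (hg : BddAbove (range (g₁ - g₂))) :
    ∃ b, ∀ x, fStar f₁ f₂ (1 / 2) b x - fStar g₁ g₂ (1 / 2) b x = f₂ x - g₂ x := by
  obtain ⟨m, hm⟩ := hf
  obtain ⟨n, hn⟩ := hg
  refine ⟨max m n / 2, fun x => ?_⟩
  have hfx : f₁ x - f₂ x ≤ m := hm ⟨x, rfl⟩
  have hgx : g₁ x - g₂ x ≤ n := hn ⟨x, rfl⟩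
  have hf : f₁ x - max m n / 2 ≤ f₂ x + max m n / 2 := by linarith [le_max_left m n]
  have hg : g₁ x - max m n / 2 ≤ g₂ x + max m n / 2 := by linarith [le_max_right m n]
  rw [fStar_half, fStar_half, max_eq_right hf, max_eq_right hg]
  ring

end fStar

/-- Proposition 2.2: for continuous `f, g : M → ℝ²` on a nonempty compact space,
`‖f − g‖∞ = sup_{(a,b) ∈ ]0,1[×ℝ} ‖f*_(a,b) − g*_(a,b)‖∞ = sup_{b ∈ ℝ} ‖f*_(1/2,b) − g*_(1/2,b)‖∞`. -/
theorem stmt_1 {M : Type*} [TopologicalSpace M] [CompactSpace M] [Nonempty M]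
    (f₁ f₂ g₁ g₂ : M → ℝ)
    (hf₁ : Continuous f₁) (hf₂ : Continuous f₂)
    (hg₁ : Continuous g₁) (hg₂ : Continuous g₂) :
    (⨆ x : M, max (|f₁ x - g₁ x|) (|f₂ x - g₂ x|)) =
      (⨆ p : {q : ℝ × ℝ // 0 < q.1 ∧ q.1 < 1},
        ⨆ x : M, |fStar f₁ f₂ p.1.1 p.1.2 x - fStar g₁ g₂ p.1.1 p.1.2 x|) ∧
    (⨆ x : M, max (|f₁ x - g₁ x|) (|f₂ x - g₂ x|)) =
      (⨆ b : ℝ, ⨆ x : M, |fStar f₁ f₂ (1/2) b x - fStar g₁ g₂ (1/2) b x|) := by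
  have hD : BddAbove (range fun x => max |f₁ x - g₁ x| |f₂ x - g₂ x|) :=
    (isCompact_range (by fun_prop)).bddAbove
  obtain ⟨b₁, hb₁⟩ := exists_fStar_half_sub_fStar_half_eq_left
    (isCompact_range (hf₁.sub hf₂)).bddBelow (isCompact_range (hg₁.sub hg₂)).bddBelow
  obtain ⟨b₂, hb₂⟩ := exists_fStar_half_sub_fStar_half_eq_right
    (isCompact_range (hf₁.sub hf₂)).bddAbove (isCompact_range (hg₁.sub hg₂)).bddAbove
  have hhalf : ∀ x, ∃ b, max |f₁ x - g₁ x| |f₂ x - g₂ x| ≤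
      |fStar f₁ f₂ (1 / 2) b x - fStar g₁ g₂ (1 / 2) b x| := fun x => by
    rcases le_total |f₁ x - g₁ x| |f₂ x - g₂ x| with h | h
    · exact ⟨b₂, by rw [hb₂, max_eq_right h]⟩
    · exact ⟨b₁, by rw [hb₁, max_eq_left h]⟩
  have : Nonempty {q : ℝ × ℝ // 0 < q.1 ∧ q.1 < 1} := ⟨⟨(1 / 2, 0), by norm_num⟩⟩
  refine ⟨ciSup_eq_ciSup_ciSup_of_le_of_exists_le hD
      (fun p => abs_fStar_sub_fStar_le f₁ f₂ g₁ g₂ p.2.1 p.2.2 p.1.2) fun x => ?_,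
    ciSup_eq_ciSup_ciSup_of_le_of_exists_le hD
      (abs_fStar_sub_fStar_le f₁ f₂ g₁ g₂ (by norm_num) (by norm_num)) hhalf⟩
  obtain ⟨b, hb⟩ := hhalf x
  exact ⟨⟨(1 / 2, b), by norm_num⟩, hb⟩
end

section
/- Define, on the closed half-plane D := {(u,v) ∈ ℝ² : u ≤ v}, the function d((u,v),(u',v')) := min( max(|u − u'|, |v − v'|), max((v − u)/2, (v' − u')/2) ). Then d is a pseudometric on D: it is nonnegative, d(X,X) = 0 for all X, symmetric, and satisfies the triangle inequality d(X,Z) ≤ d(X,Y) + d(Y,Z) for all X, Y, Z ∈ D. -/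
/-!
Writing `δ(u,v) = (v - u)/2` for the sup-norm distance of `(u,v)` to the diagonal, the function
is `d(X,Y) = min (‖X - Y‖∞) (max (δ X) (δ Y))`. Only two facts about `δ` matter: it is nonnegative
on `D` and `1`-Lipschitz for the sup norm. The triangle inequality then follows by comparing
`d(X,Z)` with each of the four combinations of branches realising `d(X,Y)` and `d(Y,Z)`: the
Lipschitz bound handles the mixed combinations, nonnegativity of `δ Y` the purely diagonal one.
-/

/-- The distance (1) of the paper on the closed half-plane `{(u,v) : u ≤ v}`. -/
noncomputable def dDelta (P Q : ℝ × ℝ) : ℝ :=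
  min (max |P.1 - Q.1| |P.2 - Q.2|) (max ((P.2 - P.1) / 2) ((Q.2 - Q.1) / 2))

section DiagDist

variable {α : Type*} [PseudoMetricSpace α] {f : α → ℝ}

/-- With `f x` the cost of sending `x` to the diagonal, the cheaper of matching `x` with `y` and
sending both to the diagonal. -/
noncomputable def diagDist (f : α → ℝ) (x y : α) : ℝ :=
  min (dist x y) (max (f x) (f y))

theorem diagDist_nonneg {x y : α} (hx : 0 ≤ f x) : 0 ≤ diagDist f x y :=
  le_min dist_nonneg (le_max_of_le_left hx)

theorem diagDist_self {x : α} (hx : 0 ≤ f x) : diagDist f x x = 0 := by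
  simp [diagDist, hx]

theorem diagDist_comm (x y : α) : diagDist f x y = diagDist f y x := by
  rw [diagDist, diagDist, dist_comm, max_comm]

theorem diagDist_triangle (hf : LipschitzWith 1 f) {x y z : α} (hy : 0 ≤ f y) :
    diagDist f x z ≤ diagDist f x y + diagDist f y z := by
  have hxy := hf.le_add_mul x y
  have hzy := hf.le_add_mul z y
  simp only [NNReal.coe_one, one_mul] at hxy hzy
  rw [dist_comm] at hzy
  have hdxy : 0 ≤ dist x y := dist_nonneg
  have hdyz : 0 ≤ dist y z := dist_nonneg
  unfold diagDist
  rcases min_choice (dist x y) (max (f x) (f y)) with hl | hl <;>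
    rcases min_choice (dist y z) (max (f y) (f z)) with hr | hr <;> rw [hl, hr]
  · exact (min_le_left _ _).trans (dist_triangle x y z)
  all_goals
    refine (min_le_right _ _).trans (max_le ?_ ?_) <;>
      linarith [le_max_left (f x) (f y), le_max_right (f x) (f y),
        le_max_left (f y) (f z), le_max_right (f y) (f z)]

end DiagDist

noncomputable def halfWidth (P : ℝ × ℝ) : ℝ := (P.2 - P.1) / 2

theorem halfWidth_nonneg {P : ℝ × ℝ} (hP : P.1 ≤ P.2) : 0 ≤ halfWidth P :=
  div_nonneg (sub_nonneg.2 hP) zero_le_two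

theorem lipschitzWith_one_halfWidth : LipschitzWith 1 halfWidth := by
  refine LipschitzWith.of_le_add fun P Q => ?_
  have h1 : |P.1 - Q.1| ≤ dist P Q := le_max_left _ _
  have h2 : |P.2 - Q.2| ≤ dist P Q := le_max_right _ _
  unfold halfWidth
  linarith [neg_abs_le (P.1 - Q.1), le_abs_self (P.2 - Q.2)]

theorem dDelta_eq_diagDist (P Q : ℝ × ℝ) : dDelta P Q = diagDist halfWidth P Q := rfl

/-- `dDelta` is a pseudometric on `D = {(u,v) : u ≤ v}`: nonnegative, zero on the
diagonal of `D × D`, symmetric, and satisfying the triangle inequality. -/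
theorem stmt_5 :
    (∀ P : ℝ × ℝ, P.1 ≤ P.2 → ∀ Q : ℝ × ℝ, Q.1 ≤ Q.2 → 0 ≤ dDelta P Q) ∧
    (∀ P : ℝ × ℝ, P.1 ≤ P.2 → dDelta P P = 0) ∧
    (∀ P Q : ℝ × ℝ, P.1 ≤ P.2 → Q.1 ≤ Q.2 → dDelta P Q = dDelta Q P) ∧
    (∀ P Q R : ℝ × ℝ, P.1 ≤ P.2 → Q.1 ≤ Q.2 → R.1 ≤ R.2 →
      dDelta P R ≤ dDelta P Q + dDelta Q R) := by
  simp only [dDelta_eq_diagDist]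
  exact ⟨fun P hP _ _ => diagDist_nonneg (halfWidth_nonneg hP),
    fun P hP => diagDist_self (halfWidth_nonneg hP),
    fun P Q _ _ => diagDist_comm P Q,
    fun _ _ _ _ hQ _ => diagDist_triangle lipschitzWith_one_halfWidth (halfWidth_nonneg hQ)⟩
end

section
/- Let X be a metric space, c > 0, U a topological space, and D : U → Set X a Hausdorff-continuous family of nonempty 2c-separated subsets. Let π : [0,1] → U be a continuous path. Then for every point X₀ ∈ D(π(0)) there exists a unique continuous map P : [0,1] → X such that P(0) = X₀ and P(τ) ∈ D(π(τ)) for every τ ∈ [0,1]. -/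
/-!
Two lifts that agree somewhere agree on a clopen set, because two points of one fibre at
distance at most `2c` coincide. For existence, compactness makes the fibres uniformly
Hausdorff-close over short intervals, so `X₀` can be transported along a fine grid to anchors,
each `c / 4`-close to the previous one. Lifting every `τ` to the point of its fibre near the
anchor of its grid cell gives a section that never jumps by `c`, and such a section is continuous:
for `τ'` near `τ` the only point of the fibre over `τ'` close to `P τ` is `P τ'`.
-/

open unitInterval

/-- `P` is a lift of the path `π` through the family of subsets `D`. -/
def IsLift {X U : Type*} [MetricSpace X] [TopologicalSpace U]
    (D : U → Set X) (π : unitInterval → U) (P : unitInterval → X) : Prop :=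
  Continuous P ∧ ∀ τ : unitInterval, P τ ∈ D (π τ)

open Filter Topology Metric
open scoped ENNReal Uniformity

namespace unitInterval

noncomputable def gridPoint (h : ℝ) (k : ℕ) : I := Set.projIcc 0 1 zero_le_one (k * h)

noncomputable def gridIndex (h : ℝ) (t : I) : ℕ := ⌊(t : ℝ) / h⌋₊

@[simp]
theorem gridPoint_zero (h : ℝ) : gridPoint h 0 = 0 := by
  simp [gridPoint]

@[simp]
theorem gridIndex_zero (h : ℝ) : gridIndex h 0 = 0 := by
  simp [gridIndex]

theorem dist_gridPoint_le (h a : ℝ) (k : ℕ) :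
    dist (gridPoint h k) (Set.projIcc 0 1 zero_le_one a) ≤ dist (k * h) a := by
  simpa [gridPoint] using (LipschitzWith.projIcc (zero_le_one' ℝ)).dist_le_mul (k * h) a

theorem dist_gridPoint_succ_le {h : ℝ} (hh : 0 ≤ h) (k : ℕ) :
    dist (gridPoint h k) (gridPoint h (k + 1)) ≤ h := by
  refine (dist_gridPoint_le h _ k).trans_eq ?_
  rw [Real.dist_eq, Nat.cast_succ, add_mul, one_mul, sub_add_cancel_left, abs_neg,
    abs_of_nonneg hh]

theorem dist_gridPoint_gridIndex_le {h : ℝ} (hh : 0 < h) (t : I) :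
    dist (gridPoint h (gridIndex h t)) t ≤ h := by
  have hle := Nat.floor_le (div_nonneg t.2.1 hh.le)
  have hlt := Nat.lt_floor_add_one ((t : ℝ) / h)
  rw [le_div_iff₀ hh] at hle
  rw [div_lt_iff₀ hh] at hlt
  calc dist (gridPoint h (gridIndex h t)) t
      = dist (gridPoint h (gridIndex h t)) (Set.projIcc 0 1 zero_le_one t) := by
        rw [Set.projIcc_val]
    _ ≤ dist (gridIndex h t * h) t := dist_gridPoint_le h _ _
    _ ≤ h := by
        rw [Real.dist_eq, abs_sub_le_iff, gridIndex]
        constructor <;> linarith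

theorem gridIndex_le_add_one {h : ℝ} (hh : 0 < h) {s t : I} (hst : dist s t < h) :
    gridIndex h s ≤ gridIndex h t + 1 := by
  have hst' : (s : ℝ) / h ≤ (t : ℝ) / h + 1 := by
    rw [Subtype.dist_eq, Real.dist_eq, abs_lt] at hst
    rw [div_add_one hh.ne', div_le_div_iff_of_pos_right hh]
    linarith
  exact (Nat.floor_le_floor hst').trans_eq (Nat.floor_add_one (div_nonneg t.2.1 hh.le))

end unitInterval

section Lifting

variable {X T : Type*} [MetricSpace X] {c : ℝ}

open Classical in
noncomputable def nearPoint (r : ℝ) (A : Set X) (x : X) : X :=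
  if h : ∃ y ∈ A, dist x y < r then h.choose else x

theorem nearPoint_mem_and_dist_lt {r : ℝ} {A B : Set X} {x : X} (hx : x ∈ A)
    (hAB : hausdorffEDist A B < ENNReal.ofReal r) :
    nearPoint r B x ∈ B ∧ dist x (nearPoint r B x) < r := by
  have h : ∃ y ∈ B, dist x y < r :=
    let ⟨y, hy, hxy⟩ := exists_edist_lt_of_hausdorffEDist_lt hx hAB
    ⟨y, hy, edist_lt_ofReal.1 hxy⟩
  rw [nearPoint, dif_pos h]
  exact h.choose_spec

noncomputable def transportSeq (r : ℝ) (A : ℕ → Set X) (x₀ : X) : ℕ → X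
  | 0 => x₀
  | k + 1 => nearPoint r (A (k + 1)) (transportSeq r A x₀ k)

@[simp]
theorem transportSeq_zero (r : ℝ) (A : ℕ → Set X) (x₀ : X) : transportSeq r A x₀ 0 = x₀ := rfl

theorem transportSeq_mem {r : ℝ} {A : ℕ → Set X} {x₀ : X} (hx₀ : x₀ ∈ A 0)
    (hA : ∀ k, hausdorffEDist (A k) (A (k + 1)) < ENNReal.ofReal r) :
    ∀ k, transportSeq r A x₀ k ∈ A k
  | 0 => hx₀
  | k + 1 => (nearPoint_mem_and_dist_lt (transportSeq_mem hx₀ hA k) (hA k)).1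

theorem dist_transportSeq_succ_lt {r : ℝ} {A : ℕ → Set X} {x₀ : X} (hx₀ : x₀ ∈ A 0)
    (hA : ∀ k, hausdorffEDist (A k) (A (k + 1)) < ENNReal.ofReal r) (k : ℕ) :
    dist (transportSeq r A x₀ k) (transportSeq r A x₀ (k + 1)) < r :=
  (nearPoint_mem_and_dist_lt (transportSeq_mem hx₀ hA k) (hA k)).2

theorem dist_lt_of_dist_succ_lt {a : ℕ → X} {r : ℝ} (hr : 0 < r)
    (ha : ∀ k, dist (a k) (a (k + 1)) < r) {k l : ℕ} (hkl : k ≤ l + 1) (hlk : l ≤ k + 1) :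
    dist (a k) (a l) < r := by
  obtain rfl | rfl | rfl : l = k + 1 ∨ l = k ∨ k = l + 1 := by omega
  · exact ha k
  · simpa using hr
  · rw [dist_comm]
    exact ha l

theorem continuousAt_of_eventually_dist_lt [TopologicalSpace T] {S : T → Set X} {P : T → X}
    {t : T} (hsep : ∀ s, (S s).Pairwise (2 * c < dist · ·))
    (hS : Tendsto (fun s => hausdorffEDist (S t) (S s)) (𝓝 t) (𝓝 0)) (hP : ∀ s, P s ∈ S s)
    (hjump : ∀ᶠ s in 𝓝 t, dist (P s) (P t) < c) : ContinuousAt P t := by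
  refine Metric.tendsto_nhds.2 fun ε hε => ?_
  rcases le_or_gt c ε with hcε | hεc
  · exact hjump.mono fun s hs => hs.trans_le hcε
  filter_upwards [hS.eventually (gt_mem_nhds (ENNReal.ofReal_pos.2 hε)), hjump] with s hSs hs
  obtain ⟨y, hy, hty⟩ := exists_edist_lt_of_hausdorffEDist_lt (hP t) hSs
  rw [edist_lt_ofReal] at hty
  have hyP : y = P s := (hsep s).eq hy (hP s) <| not_lt.2 <| by
    linarith [dist_triangle y (P t) (P s), dist_comm y (P t), dist_comm (P s) (P t)]
  rwa [dist_comm, ← hyP]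

theorem eq_of_continuous_of_forall_mem [TopologicalSpace T] [PreconnectedSpace T]
    {S : T → Set X} (hc : 0 < c) (hsep : ∀ s, (S s).Pairwise (2 * c < dist · ·))
    {P Q : T → X} (hP : Continuous P) (hQ : Continuous Q) (hPS : ∀ t, P t ∈ S t)
    (hQS : ∀ t, Q t ∈ S t) {t₀ : T} (h₀ : P t₀ = Q t₀) : P = Q := by
  have hopen : IsOpen {t | P t = Q t} := isOpen_iff_mem_nhds.2 fun t (ht : P t = Q t) => by
    filter_upwards [Metric.tendsto_nhds.1 (hP.tendsto t) c hc,
      Metric.tendsto_nhds.1 (hQ.tendsto t) c hc] with s hPs hQs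
    refine (hsep s).eq (hPS s) (hQS s) (not_lt.2 ?_)
    linarith [dist_triangle_right (P s) (Q s) (P t), ht ▸ hQs]
  have huniv := IsClopen.eq_univ ⟨isClosed_eq hP hQ, hopen⟩ ⟨t₀, h₀⟩
  exact funext fun t => Set.eq_univ_iff_forall.1 huniv t

theorem eventually_uniformity_hausdorffEDist_lt [UniformSpace T] [CompactSpace T]
    {S : T → Set X} (hS : ∀ t, Tendsto (fun s => hausdorffEDist (S t) (S s)) (𝓝 t) (𝓝 0))
    {ε : ℝ≥0∞} (hε : 0 < ε) : ∀ᶠ p in 𝓤 T, hausdorffEDist (S p.1) (S p.2) < ε := by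
  obtain ⟨V, hV, hVS⟩ := lebesgue_number_lemma_nhds isCompact_univ fun t _ =>
    (hS t).eventually (gt_mem_nhds (ENNReal.half_pos hε.ne'))
  filter_upwards [hV] with ⟨s, s'⟩ hss'
  obtain ⟨t, ht⟩ := hVS s trivial
  have hs : hausdorffEDist (S t) (S s) < ε / 2 := ht (refl_mem_uniformity hV)
  have hs' : hausdorffEDist (S t) (S s') < ε / 2 := ht hss'
  calc hausdorffEDist (S s) (S s') ≤ hausdorffEDist (S s) (S t) + hausdorffEDist (S t) (S s') :=
        hausdorffEDist_triangle
    _ < ε / 2 + ε / 2 := by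
        rw [hausdorffEDist_comm]
        exact ENNReal.add_lt_add hs hs'
    _ = ε := ENNReal.add_halves ε

theorem exists_continuous_forall_mem_of_mem_zero {S : I → Set X} (hc : 0 < c)
    (hsep : ∀ t, (S t).Pairwise (2 * c < dist · ·))
    (hS : ∀ t, Tendsto (fun s => hausdorffEDist (S t) (S s)) (𝓝 t) (𝓝 0))
    {x₀ : X} (hx₀ : x₀ ∈ S 0) : ∃ P : I → X, Continuous P ∧ (∀ t, P t ∈ S t) ∧ P 0 = x₀ := by
  obtain ⟨δ, hδ, hδS⟩ := mem_uniformity_dist.1 <|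
    eventually_uniformity_hausdorffEDist_lt hS (ENNReal.ofReal_pos.2 (by positivity : 0 < c / 4))
  have hh : 0 < δ / 2 := by positivity
  have hgrid : ∀ k, hausdorffEDist (S (gridPoint (δ / 2) k)) (S (gridPoint (δ / 2) (k + 1))) <
      ENNReal.ofReal (c / 4) := fun k =>
    hδS <| (dist_gridPoint_succ_le hh.le k).trans_lt (by linarith)
  set a := transportSeq (c / 4) (fun k => S (gridPoint (δ / 2) k)) x₀
  have hx₀' : x₀ ∈ S (gridPoint (δ / 2) 0) := by rwa [gridPoint_zero]
  set P : I → X := fun t => nearPoint (c / 4) (S t) (a (gridIndex (δ / 2) t))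
  have hP : ∀ t, P t ∈ S t ∧ dist (a (gridIndex (δ / 2) t)) (P t) < c / 4 := fun t =>
    nearPoint_mem_and_dist_lt (transportSeq_mem hx₀' hgrid _) <|
      hδS <| (dist_gridPoint_gridIndex_le hh t).trans_lt (by linarith)
  have hjump : ∀ s t, dist s t < δ / 2 → dist (P s) (P t) < c := fun s t hst => by
    have hanchor := dist_lt_of_dist_succ_lt (by positivity) (dist_transportSeq_succ_lt hx₀' hgrid)
      (gridIndex_le_add_one hh hst) (gridIndex_le_add_one hh (dist_comm s t ▸ hst))
    linarith [dist_triangle4 (P s) (a (gridIndex (δ / 2) s)) (a (gridIndex (δ / 2) t)) (P t),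
      dist_comm (P s) (a (gridIndex (δ / 2) s)), (hP s).2, (hP t).2]
  refine ⟨P, continuous_iff_continuousAt.2 fun t => ?_, fun t => (hP t).1, ?_⟩
  · exact continuousAt_of_eventually_dist_lt hsep (hS t) (fun s => (hP s).1)
      (eventually_nhds_iff.2 ⟨δ / 2, hh, fun s hs => hjump s t hs⟩)
  · have h₀ : dist x₀ (P 0) < c / 4 := by
      simpa only [gridIndex_zero, a, transportSeq_zero] using (hP 0).2
    exact (hsep 0).eq (hP 0).1 hx₀ (not_lt.2 (by rw [dist_comm]; linarith))

end Lifting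

theorem stmt_7_general {X U : Type*} [MetricSpace X] [TopologicalSpace U]
    (c : ℝ) (hc : 0 < c) (D : U → Set X)
    (hsep : ∀ p : U, ∀ x ∈ D p, ∀ y ∈ D p, x ≠ y → 2 * c < dist x y)
    (hcont : ∀ p : U, ∀ ε : ℝ, 0 < ε → ∃ V ∈ nhds p, ∀ q ∈ V,
      EMetric.hausdorffEdist (D p) (D q) ≤ ENNReal.ofReal ε)
    (π : unitInterval → U) (hπ : Continuous π) :
    ∀ X₀ ∈ D (π 0), ∃! P : unitInterval → X, IsLift D π P ∧ P 0 = X₀ := by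
  intro X₀ hX₀
  have hD : ∀ p, Tendsto (fun q => hausdorffEDist (D p) (D q)) (𝓝 p) (𝓝 0) := fun p =>
    ENNReal.tendsto_nhds_zero.2 fun ε hε => by
      obtain ⟨r, -, hr, hrε⟩ := ENNReal.lt_iff_exists_real_btwn.1 hε
      obtain ⟨V, hV, hVD⟩ := hcont p r (ENNReal.ofReal_pos.1 hr)
      exact mem_of_superset hV fun q hq => (hVD q hq).trans hrε.le
  have hsep' : ∀ t, (D (π t)).Pairwise (2 * c < dist · ·) := fun t => hsep (π t)
  obtain ⟨P, hPc, hPD, hP₀⟩ := exists_continuous_forall_mem_of_mem_zero hc hsep'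
    (fun t => (hD (π t)).comp (hπ.tendsto t)) hX₀
  refine ⟨P, ⟨⟨hPc, hPD⟩, hP₀⟩, fun Q ⟨⟨hQc, hQD⟩, hQ₀⟩ => ?_⟩
  exact eq_of_continuous_of_forall_mem hc hsep' hQc hPc hQD hPD (hQ₀.trans hP₀.symm)

/-- Unique path lifting (abstract form of Proposition 4.2): if `D` is a
Hausdorff-continuous family of nonempty `2c`-separated subsets of a metric space and
`π` is a continuous path in `U`, then every `X₀ ∈ D (π 0)` admits a unique continuous
lift `P` of `π` with `P 0 = X₀`. -/
theorem stmt_7 {X U : Type*} [MetricSpace X] [TopologicalSpace U]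
    (c : ℝ) (hc : 0 < c) (D : U → Set X)
    (hne : ∀ p : U, (D p).Nonempty)
    (hsep : ∀ p : U, ∀ x ∈ D p, ∀ y ∈ D p, x ≠ y → 2 * c < dist x y)
    (hcont : ∀ p : U, ∀ ε : ℝ, 0 < ε → ∃ V ∈ nhds p, ∀ q ∈ V,
      EMetric.hausdorffEdist (D p) (D q) ≤ ENNReal.ofReal ε)
    (π : unitInterval → U) (hπ : Continuous π) :
    ∀ X₀ ∈ D (π 0), ∃! P : unitInterval → X, IsLift D π P ∧ P 0 = X₀ :=
  stmt_7_general c hc D hsep hcont π hπ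
end

section
/- Let X be a metric space, c > 0, U a topological space, and D : U → Set X a Hausdorff-continuous family of nonempty 2c-separated subsets. Let π : [0,1] → U be a continuous path. Then the transport map T_π : D(π(0)) → D(π(1)), sending each X₀ ∈ D(π(0)) to the endpoint P(1) of the unique lift P of π with P(0) = X₀, is a bijection from D(π(0)) onto D(π(1)), and its inverse is the transport map T_{π⁻¹} along the reverse path π⁻¹(t) := π(1−t). -/
/-!
Separation makes lifting rigid: in a Hausdorff-continuous family of `2c`-separated sets,
continuous sections that agree at one point agree everywhere (the agreement set is clopen), and a
section chosen within `c/2` of a fixed point is automatically continuous. By compactness of `[0,1]`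
the fibres along a path move by at most `c/4` over intervals of a fixed length `δ`, so a lift can be
continued by `δ` at a time until it covers `[0,1]`. Running this along the reversed path gives a
lift ending at any prescribed point of `D (π 1)`.
-/

open unitInterval

open Topology Metric

def HausdorffContinuous {X T : Type*} [PseudoMetricSpace X] [TopologicalSpace T]
    (D : T → Set X) : Prop :=
  ∀ p, ∀ ε : ℝ, 0 < ε → ∃ V ∈ 𝓝 p, ∀ q ∈ V, hausdorffEDist (D p) (D q) ≤ ENNReal.ofReal ε

theorem HausdorffContinuous.comp {X T U : Type*} [PseudoMetricSpace X] [TopologicalSpace T]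
    [TopologicalSpace U] {D : U → Set X} (hD : HausdorffContinuous D) {f : T → U}
    (hf : Continuous f) : HausdorffContinuous (D ∘ f) := fun p ε hε =>
  let ⟨V, hV, hDV⟩ := hD (f p) ε hε
  ⟨f ⁻¹' V, hf.continuousAt.preimage_mem_nhds hV, fun q hq => hDV (f q) hq⟩

theorem HausdorffContinuous.exists_uniform {X T : Type*} [PseudoMetricSpace X]
    [PseudoMetricSpace T] [CompactSpace T] {D : T → Set X} (hD : HausdorffContinuous D)
    {ε : ℝ} (hε : 0 < ε) :
    ∃ δ > 0, ∀ s s', dist s s' < δ → hausdorffEDist (D s) (D s') ≤ ENNReal.ofReal ε := by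
  choose V hV hDV using fun t => hD t (ε / 2) (half_pos hε)
  obtain ⟨δ, hδ, hball⟩ := lebesgue_number_lemma_of_metric isCompact_univ
    (fun t => isOpen_interior (s := V t))
    (fun s _ => Set.mem_iUnion.mpr ⟨s, mem_interior_iff_mem_nhds.mpr (hV s)⟩)
  refine ⟨δ, hδ, fun s s' hss' => ?_⟩
  obtain ⟨t, ht⟩ := hball s trivial
  have hs : s ∈ V t := interior_subset (ht (mem_ball_self hδ))
  have hs' : s' ∈ V t := interior_subset (ht (mem_ball'.mpr hss'))
  calc hausdorffEDist (D s) (D s') ≤ hausdorffEDist (D s) (D t) + hausdorffEDist (D t) (D s') :=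
        hausdorffEDist_triangle
    _ ≤ ENNReal.ofReal (ε / 2) + ENNReal.ofReal (ε / 2) :=
        add_le_add (hausdorffEDist_comm.trans_le (hDV t s hs)) (hDV t s' hs')
    _ = ENNReal.ofReal ε := by
        rw [← ENNReal.ofReal_add (by positivity) (by positivity), add_halves]

theorem exists_dist_lt_of_hausdorffEDist_le {X : Type*} [PseudoMetricSpace X] {s t : Set X}
    {x : X} (hx : x ∈ s) {ε r : ℝ} (h : hausdorffEDist s t ≤ ENNReal.ofReal ε) (hεr : ε < r)
    (hr : 0 < r) : ∃ y ∈ t, dist x y < r := by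
  obtain ⟨y, hy, hxy⟩ := exists_edist_lt_of_hausdorffEDist_lt hx
    (h.trans_lt ((ENNReal.ofReal_lt_ofReal_iff hr).mpr hεr))
  exact ⟨y, hy, edist_lt_ofReal.mp hxy⟩

section Sections

variable {X T : Type*} [PseudoMetricSpace X] {c : ℝ} {D : T → Set X}

theorem eq_of_mem_of_dist_le (hsep : ∀ p, (D p).Pairwise fun x y => 2 * c < dist x y) {p : T}
    {x y : X} (hx : x ∈ D p) (hy : y ∈ D p) (hxy : dist x y ≤ 2 * c) : x = y := by
  by_contra hne
  exact (hsep p hx hy hne).not_ge hxy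

variable [TopologicalSpace T]

/-- The set where two sections are closer than `2 * c` is open, and closed because by separation
it is the set where they are at distance `0`. -/
theorem eq_of_continuous_sections [PreconnectedSpace T] (hc : 0 < c)
    (hsep : ∀ p, (D p).Pairwise fun x y => 2 * c < dist x y) {P Q : T → X}
    (hP : Continuous P) (hQ : Continuous Q) (hPD : ∀ s, P s ∈ D s) (hQD : ∀ s, Q s ∈ D s)
    {a : T} (ha : P a = Q a) (b : T) : P b = Q b := by
  have hlt_eq_zero : {s | dist (P s) (Q s) < 2 * c} = {s | dist (P s) (Q s) = 0} := by
    ext s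
    refine ⟨fun h => ?_, fun h => ?_⟩
    · rw [Set.mem_ofPred_eq, eq_of_mem_of_dist_le hsep (hPD s) (hQD s) h.le, dist_self]
    · rw [Set.mem_ofPred_eq, Set.mem_ofPred_eq.mp h]
      positivity
  have hclopen : IsClopen {s | dist (P s) (Q s) < 2 * c} :=
    ⟨hlt_eq_zero ▸ isClosed_eq (hP.dist hQ) continuous_const,
      isOpen_lt (hP.dist hQ) continuous_const⟩
  have hb : dist (P b) (Q b) < 2 * c :=
    Set.eq_univ_iff_forall.mp (hclopen.eq_univ ⟨a, by simpa [ha] using hc⟩) b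
  exact eq_of_mem_of_dist_le hsep (hPD b) (hQD b) hb.le

/-- Continuity at `s₀`: a point of `D s` close to `F s₀` lies within `2 * c` of `F s`,
hence is `F s`. -/
theorem continuous_of_forall_dist_le (hc : 0 < c)
    (hsep : ∀ p, (D p).Pairwise fun x y => 2 * c < dist x y) (hD : HausdorffContinuous D)
    {y : X} {F : T → X} (hFD : ∀ s, F s ∈ D s) (hFy : ∀ s, dist y (F s) ≤ c / 2) :
    Continuous F := by
  refine Metric.continuous_iff'.mpr fun s₀ ε hε => ?_
  set ε' := min ε c
  have hε' : 0 < ε' := lt_min hε hc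
  obtain ⟨V, hV, hDV⟩ := hD s₀ (ε' / 2) (by positivity)
  filter_upwards [hV] with s hs
  obtain ⟨z, hz, hF₀z⟩ :=
    exists_dist_lt_of_hausdorffEDist_le (hFD s₀) (hDV s hs) (by linarith) hε'
  have hzF : z = F s := by
    refine eq_of_mem_of_dist_le hsep hz (hFD s) ?_
    calc dist z (F s) ≤ dist z (F s₀) + dist (F s₀) y + dist y (F s) := dist_triangle4 _ _ _ _
      _ ≤ ε' + c / 2 + c / 2 := by
          rw [dist_comm z, dist_comm _ y]
          linarith [hFy s₀, hFy s]
      _ ≤ 2 * c := by linarith [min_le_right ε c]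
  rw [← hzF, dist_comm]
  exact hF₀z.trans_le (min_le_left ε c)

theorem exists_continuous_section_near (hc : 0 < c)
    (hsep : ∀ p, (D p).Pairwise fun x y => 2 * c < dist x y) (hD : HausdorffContinuous D)
    {y : X} (hy : ∀ s, ∃ z ∈ D s, dist y z ≤ c / 2) :
    ∃ F : T → X, Continuous F ∧ ∀ s, F s ∈ D s ∧ dist y (F s) ≤ c / 2 := by
  choose F hFD hFy using hy
  exact ⟨F, continuous_of_forall_dist_le hc hsep hD hFD hFy, fun s => ⟨hFD s, hFy s⟩⟩

end Sections

section UnitInterval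

variable {X : Type*} [PseudoMetricSpace X] {c : ℝ} {E : I → Set X}

/-- A section over `[0, t]` extends to one over `[0, t + δ]`: past `t` take the section near `P t`
of `E` pulled back along the clamp of `[0, 1]` onto `[t, t + δ]`. -/
theorem exists_continuous_extension (hc : 0 < c)
    (hsep : ∀ p, (E p).Pairwise fun x y => 2 * c < dist x y) (hE : HausdorffContinuous E)
    {δ : ℝ} (hδ0 : 0 ≤ δ)
    (hδ : ∀ s s', dist s s' ≤ δ → hausdorffEDist (E s) (E s') ≤ ENNReal.ofReal (c / 4))
    {t : ℝ} (ht : 0 ≤ t) {P : I → X} (hP : Continuous P)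
    (hPE : ∀ s : I, (s : ℝ) ≤ t → P s ∈ E s) :
    ∃ Q : I → X, Continuous Q ∧ Q 0 = P 0 ∧ ∀ s : I, (s : ℝ) ≤ t + δ → Q s ∈ E s := by
  rcases le_or_gt 1 t with ht1 | ht1
  · exact ⟨P, hP, rfl, fun s _ => hPE s (s.2.2.trans ht1)⟩
  set t₁ : I := ⟨t, ht, ht1.le⟩
  set b₁ : I := ⟨min (t + δ) 1, le_min (by linarith) zero_le_one, min_le_right _ _⟩
  have htb : t₁ ≤ b₁ := Subtype.coe_le_coe.mp (le_min (by simp [t₁]; linarith) ht1.le)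
  set clamp : I → I := fun s => max t₁ (min s b₁)
  have hclamp : Continuous clamp := continuous_const.max (continuous_id.min continuous_const)
  have hclamp_eq : ∀ s : I, t ≤ s → (s : ℝ) ≤ t + δ → clamp s = s := fun s hts hsδ => by
    have hsb : s ≤ b₁ := Subtype.coe_le_coe.mp (le_min hsδ s.2.2)
    simp only [clamp, min_eq_left hsb, max_eq_right (Subtype.coe_le_coe.mp hts : t₁ ≤ s)]
  have hclamp_dist : ∀ s, dist t₁ (clamp s) ≤ δ := fun s => by
    have h₁ : t ≤ (clamp s : ℝ) := le_max_left t₁ (min s b₁)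
    have h₂ : (clamp s : ℝ) ≤ min (t + δ) 1 := max_le htb (min_le_right s b₁)
    rw [Subtype.dist_eq, Real.dist_eq, abs_le, show ((t₁ : I) : ℝ) = t from rfl]
    constructor <;> linarith [min_le_left (t + δ) 1]
  have hPt : P t₁ ∈ E t₁ := hPE t₁ le_rfl
  obtain ⟨F, hF, hFE⟩ := exists_continuous_section_near (D := E ∘ clamp) (y := P t₁) hc
    (fun s => hsep (clamp s)) (hE.comp hclamp) fun s =>
      let ⟨z, hz, hPz⟩ := exists_dist_lt_of_hausdorffEDist_le hPt (hδ _ _ (hclamp_dist s))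
        (by linarith) (by positivity)
      ⟨z, hz, hPz.le⟩
  have hFt : F t₁ = P t₁ := by
    have hFt₁ := (hFE t₁).1
    rw [Function.comp_apply, hclamp_eq t₁ le_rfl (by simp [t₁]; linarith)] at hFt₁
    refine eq_of_mem_of_dist_le hsep hFt₁ hPt ?_
    linarith [dist_comm (F t₁) (P t₁), (hFE t₁).2]
  refine ⟨fun s => if (s : ℝ) ≤ t then P s else F s,
    hP.if_le hF continuous_subtype_val continuous_const fun s hs => ?_, by simp [ht], ?_⟩
  · rw [show s = t₁ from Subtype.ext hs, hFt]
  · intro s hs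
    dsimp only
    split_ifs with hst
    · exact hPE s hst
    · simpa [hclamp_eq s (not_le.mp hst).le hs] using (hFE s).1

theorem exists_continuous_section (hc : 0 < c)
    (hsep : ∀ p, (E p).Pairwise fun x y => 2 * c < dist x y) (hE : HausdorffContinuous E)
    {x : X} (hx : x ∈ E 0) : ∃ P : I → X, Continuous P ∧ (∀ s, P s ∈ E s) ∧ P 0 = x := by
  obtain ⟨δ, hδ, hδE⟩ := hE.exists_uniform (ε := c / 4) (by positivity)
  have hlift : ∀ n : ℕ, ∃ P : I → X, Continuous P ∧ P 0 = x ∧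
      ∀ s : I, (s : ℝ) ≤ n * (δ / 2) → P s ∈ E s := by
    intro n
    induction n with
    | zero =>
      refine ⟨fun _ => x, continuous_const, rfl, fun s hs => ?_⟩
      rwa [show s = 0 from Subtype.ext (le_antisymm (by simpa using hs) s.2.1)]
    | succ n ih =>
      obtain ⟨P, hP, hP0, hPE⟩ := ih
      obtain ⟨Q, hQ, hQ0, hQE⟩ := exists_continuous_extension (δ := δ / 2) hc hsep hE
        (by positivity) (fun s s' h => hδE s s' (by linarith)) (by positivity) hP hPE
      exact ⟨Q, hQ, hQ0.trans hP0, fun s hs => hQE s (by push_cast at hs; linarith)⟩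
  obtain ⟨n, hn⟩ := exists_nat_ge (2 / δ)
  obtain ⟨P, hP, hP0, hPE⟩ := hlift n
  have hn' : 2 ≤ n * δ := (div_le_iff₀ hδ).mp hn
  exact ⟨P, hP, fun s => hPE s (s.2.2.trans (by linarith)), hP0⟩

end UnitInterval

/-- The transport `T_π` is injective by the second conjunct and surjective by the third, and the
first says that reversing lifts maps the transport along `π` to the transport along `π⁻¹`,
so `T_{π⁻¹}` is its inverse. -/
theorem stmt_9_general {X U : Type*} [MetricSpace X] [TopologicalSpace U]
    (c : ℝ) (hc : 0 < c) (D : U → Set X)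
    (hsep : ∀ p : U, ∀ x ∈ D p, ∀ y ∈ D p, x ≠ y → 2 * c < dist x y)
    (hcont : ∀ p : U, ∀ ε : ℝ, 0 < ε → ∃ V ∈ nhds p, ∀ q ∈ V,
      EMetric.hausdorffEdist (D p) (D q) ≤ ENNReal.ofReal ε)
    (π : unitInterval → U) (hπ : Continuous π) :
    (∀ P : unitInterval → X, IsLift D π P →
      IsLift D (π ∘ unitInterval.symm) (P ∘ unitInterval.symm)) ∧
    (∀ P Q : unitInterval → X, IsLift D π P → IsLift D π Q → P 1 = Q 1 → P 0 = Q 0) ∧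
    (∀ Y ∈ D (π 1), ∃ P : unitInterval → X, IsLift D π P ∧ P 1 = Y) := by
  have hD : HausdorffContinuous D := hcont
  refine ⟨fun P hP => ⟨hP.1.comp continuous_symm, fun τ => hP.2 (σ τ)⟩,
    fun P Q hP hQ h1 => eq_of_continuous_sections (D := D ∘ π) hc (fun p => hsep (π p))
      hP.1 hQ.1 hP.2 hQ.2 h1 0, fun Y hY => ?_⟩
  obtain ⟨P, hP, hPD, hP0⟩ := exists_continuous_section (E := D ∘ π ∘ σ) hc
    (fun p => hsep (π (σ p))) (hD.comp (hπ.comp continuous_symm)) (by simpa using hY)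
  exact ⟨P ∘ σ, ⟨hP.comp continuous_symm, fun τ => by simpa using hPD (σ τ)⟩, by simpa using hP0⟩

/-- Abstract form of the claim that the transport `T_π` is a bijection from `D (π 0)`
onto `D (π 1)` whose inverse is the transport `T_{π⁻¹}` along the reverse path:
(1) the reverse of any lift of `π` is a lift of the reverse path `π⁻¹(t) = π(1−t)`;
(2) lifts of `π` with the same endpoint have the same starting point (injectivity);
(3) every point of `D (π 1)` is the endpoint of some lift of `π` (surjectivity). -/
theorem stmt_9 {X U : Type*} [MetricSpace X] [TopologicalSpace U]
    (c : ℝ) (hc : 0 < c) (D : U → Set X)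
    (hne : ∀ p : U, (D p).Nonempty)
    (hsep : ∀ p : U, ∀ x ∈ D p, ∀ y ∈ D p, x ≠ y → 2 * c < dist x y)
    (hcont : ∀ p : U, ∀ ε : ℝ, 0 < ε → ∃ V ∈ nhds p, ∀ q ∈ V,
      EMetric.hausdorffEdist (D p) (D q) ≤ ENNReal.ofReal ε)
    (π : unitInterval → U) (hπ : Continuous π) :
    (∀ P : unitInterval → X, IsLift D π P →
      IsLift D (π ∘ unitInterval.symm) (P ∘ unitInterval.symm)) ∧
    (∀ P Q : unitInterval → X, IsLift D π P → IsLift D π Q → P 1 = Q 1 → P 0 = Q 0) ∧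
    (∀ Y ∈ D (π 1), ∃ P : unitInterval → X, IsLift D π P ∧ P 1 = Y) :=
  stmt_9_general c hc D hsep hcont π hπ
end

section
/- Let X be a metric space, c > 0, U a metric space, and D : U → Set X a family of nonempty 2c-separated subsets which is L-Lipschitz in Hausdorff distance for some L ≥ 0 (hausdorffEdist(D(p), D(q)) ≤ L · dist(p,q) for all p, q ∈ U). Let π, π' : [0,1] → U be continuous paths with π(0) = π'(0), and suppose η := L · (sup over t ∈ [0,1] of dist(π(t), π'(t))) < c. Then for every X₀ ∈ D(π(0)), the unique lifts P of π and P' of π' with P(0) = P'(0) = X₀ satisfy dist(P(t), P'(t)) ≤ η for every t ∈ [0,1]; in particular dist(T_π(X₀), T_{π'}(X₀)) ≤ η. -/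
/-!
While the two lifts are closer than `c`, the point of `D (π' t)` nearest to `P t` (within
the Hausdorff distance `η`) must be `P' t` itself, by `2c`-separation; so the distance between
the lifts can never lie in the gap `(η, c)`. Since it is `0` at time `0` and varies
continuously, it stays `≤ η` for all time.
-/

open unitInterval

theorem dist_le_of_hausdorffEDist_le_of_separated {X : Type*} [MetricSpace X]
    {A B : Set X} {x y : X} {c η : ℝ}
    (hB : ∀ z ∈ B, ∀ w ∈ B, z ≠ w → 2 * c < dist z w) (hx : x ∈ A) (hy : y ∈ B)
    (hη : 0 ≤ η) (hAB : Metric.hausdorffEDist A B ≤ ENNReal.ofReal η) (hxy : dist x y < c) :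
    dist x y ≤ η := by
  by_contra! hηxy
  have hdist : Metric.hausdorffDist A B ≤ η := ENNReal.toReal_le_of_le_ofReal hη hAB
  obtain ⟨z, hz, hxz⟩ := Metric.exists_dist_lt_of_hausdorffDist_lt hx (hdist.trans_lt hηxy)
    (ne_top_of_le_ne_top ENNReal.ofReal_ne_top hAB)
  have hzy : z = y := by
    by_contra hzy
    linarith [hB z hz y hy hzy, dist_triangle_left z y x]
  exact hxz.ne (congrArg (dist x) hzy)

theorem le_of_continuous_of_forall_lt_imp_le {α : Type*} [TopologicalSpace α]
    [PreconnectedSpace α] {f : α → ℝ} {η c : ℝ} (hf : Continuous f) {a : α}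
    (ha : f a ≤ η) (hηc : η < c) (hgap : ∀ s, f s < c → f s ≤ η) (t : α) : f t ≤ η := by
  by_contra! ht
  set v := min (f t) ((η + c) / 2)
  have hηv : η < v := lt_min ht (by linarith)
  have hvc : v < c := (min_le_right _ _).trans_lt (by linarith)
  obtain ⟨s, hs⟩ := intermediate_value_univ a t hf ⟨by linarith, min_le_left _ _⟩
  linarith [hgap s (hs ▸ hvc)]

theorem stmt_11_general {X U : Type*} [MetricSpace X] [MetricSpace U]
    (c : ℝ) (L : ℝ) (hL : 0 ≤ L) (D : U → Set X)
    (hsep : ∀ p : U, ∀ x ∈ D p, ∀ y ∈ D p, x ≠ y → 2 * c < dist x y)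
    (hLip : ∀ p q : U, EMetric.hausdorffEdist (D p) (D q) ≤ ENNReal.ofReal (L * dist p q))
    (π π' : unitInterval → U) (hπ : Continuous π) (hπ' : Continuous π')
    (hη : L * (⨆ t : unitInterval, dist (π t) (π' t)) < c) :
    ∀ X₀ ∈ D (π 0), ∀ P P' : unitInterval → X,
      IsLift D π P → IsLift D π' P' → P 0 = X₀ → P' 0 = X₀ →
      ∀ t : unitInterval,
        dist (P t) (P' t) ≤ L * (⨆ s : unitInterval, dist (π s) (π' s)) := by
  intro X₀ _ P P' hP hP' hP0 hP'0
  have hbdd : BddAbove (Set.range fun s : unitInterval => dist (π s) (π' s)) :=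
    (isCompact_range (continuous_dist.comp (hπ.prodMk hπ'))).bddAbove
  have hη0 : 0 ≤ L * ⨆ s : unitInterval, dist (π s) (π' s) :=
    mul_nonneg hL (Real.iSup_nonneg fun _ => dist_nonneg)
  have hclose : ∀ s, Metric.hausdorffEDist (D (π s)) (D (π' s)) ≤
      ENNReal.ofReal (L * ⨆ s : unitInterval, dist (π s) (π' s)) := fun s =>
    (hLip _ _).trans (ENNReal.ofReal_le_ofReal (mul_le_mul_of_nonneg_left (le_ciSup hbdd s) hL))
  exact le_of_continuous_of_forall_lt_imp_le (f := fun s => dist (P s) (P' s))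
    (continuous_dist.comp (hP.1.prodMk hP'.1)) (a := 0) (by simpa [hP0, hP'0] using hη0) hη
    fun s hs =>
      dist_le_of_hausdorffEDist_le_of_separated (hsep _) (hP.2 s) (hP'.2 s) hη0 (hclose s) hs

/-- Abstract form of Proposition 4.6 (continuity of the transport with respect to changes
in the path): if `D` is an `L`-Lipschitz (in Hausdorff distance) family of nonempty
`2c`-separated subsets and `π, π'` are continuous paths with the same starting point such
that `η := L · sup_t dist (π t) (π' t) < c`, then the lifts of `π` and `π'` starting at
the same point `X₀` stay within distance `η` of each other; in particular
`dist (T_π X₀) (T_{π'} X₀) ≤ η`. -/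
theorem stmt_11 {X U : Type*} [MetricSpace X] [MetricSpace U]
    (c : ℝ) (hc : 0 < c) (L : ℝ) (hL : 0 ≤ L) (D : U → Set X)
    (hne : ∀ p : U, (D p).Nonempty)
    (hsep : ∀ p : U, ∀ x ∈ D p, ∀ y ∈ D p, x ≠ y → 2 * c < dist x y)
    (hLip : ∀ p q : U, EMetric.hausdorffEdist (D p) (D q) ≤ ENNReal.ofReal (L * dist p q))
    (π π' : unitInterval → U) (hπ : Continuous π) (hπ' : Continuous π')
    (h0 : π 0 = π' 0)
    (hη : L * (⨆ t : unitInterval, dist (π t) (π' t)) < c) :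
    ∀ X₀ ∈ D (π 0), ∀ P P' : unitInterval → X,
      IsLift D π P → IsLift D π' P' → P 0 = X₀ → P' 0 = X₀ →
      ∀ t : unitInterval,
        dist (P t) (P' t) ≤ L * (⨆ s : unitInterval, dist (π s) (π' s)) :=
  stmt_11_general c L hL D hsep hLip π π' hπ hπ' hη
end

section
/- Let X be a metric space, c > 0, U a topological space, and let D, D' : U → Set X be two Hausdorff-continuous families of nonempty 2c-separated subsets. Suppose there is η < c such that hausdorffEdist(D(p), D'(p)) ≤ η for every p ∈ U. Let π : [0,1] → U be a continuous path, and let X₀ ∈ D(π(0)), Y₀ ∈ D'(π(0)) with dist(X₀, Y₀) ≤ η. Then the unique lifts P of π in D with P(0) = X₀ and Q of π in D' with Q(0) = Y₀ satisfy dist(P(t), Q(t)) ≤ η for every t ∈ [0,1]; in particular dist(P(1), Q(1)) ≤ η. -/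
/-!
Along the path, `t ↦ dist (P t) (Q t)` is continuous. At each time it avoids the interval
`(η, 2c - η)`: since `D` lies in the `η`-neighbourhood of `D'`, some point of `D'` is close to
`P t`, and that point is either `Q t` or, by `2c`-separation, far from `Q t`. As `η < c` the gap
is nonempty, so by connectedness of `[0, 1]` the distance cannot leave `[0, η]`, where it starts.
-/

open unitInterval

open Set

lemma Continuous.le_of_forall_notMem_Ioo {Y α : Type*} [TopologicalSpace Y] [PreconnectedSpace Y]
    [LinearOrder α] [TopologicalSpace α] [OrderClosedTopology α] [DenselyOrdered α]
    {f : Y → α} (hf : Continuous f) {a b : α} (hab : a < b) (hgap : ∀ y, f y ∉ Ioo a b)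
    {y₀ : Y} (h₀ : f y₀ ≤ a) (y : Y) : f y ≤ a := by
  by_contra! hy
  have hby : b ≤ f y := not_lt.mp fun hyb => hgap y ⟨hy, hyb⟩
  obtain ⟨m, ham, hmb⟩ := exists_between hab
  obtain ⟨z, hz⟩ := intermediate_value_univ y₀ y hf ⟨h₀.trans ham.le, hmb.le.trans hby⟩
  exact hgap z (hz ▸ ⟨ham, hmb⟩)

lemma dist_notMem_Ioo_of_hausdorffEDist_le {X : Type*} [MetricSpace X] {A B : Set X}
    {x y : X} {c η : ℝ} (hx : x ∈ A) (hy : y ∈ B) (hη : 0 ≤ η)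
    (hAB : Metric.hausdorffEDist A B ≤ ENNReal.ofReal η)
    (hB : B.Pairwise fun y y' => 2 * c < dist y y') :
    dist x y ∉ Ioo η (2 * c - η) := by
  rintro ⟨hlo, hhi⟩
  set r := min (dist x y) (2 * c - dist x y)
  have hηr : η < r := lt_min hlo (by linarith)
  have hAB_lt : Metric.hausdorffEDist A B < ENNReal.ofReal r :=
    hAB.trans_lt ((ENNReal.ofReal_lt_ofReal_iff (hη.trans_lt hηr)).mpr hηr)
  obtain ⟨y', hy', hxy'⟩ := Metric.exists_edist_lt_of_hausdorffEDist_lt hx hAB_lt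
  rw [edist_lt_ofReal] at hxy'
  rcases eq_or_ne y y' with rfl | hne
  · exact (hxy'.trans_le (min_le_left _ _)).false
  · have hfar := hB hy hy' hne
    have htri := dist_triangle_left y y' x
    have hr := min_le_right (dist x y) (2 * c - dist x y)
    linarith

theorem stmt_12_general {X U : Type*} [MetricSpace X] [TopologicalSpace U]
    (c : ℝ) (η : ℝ) (hη : η < c) (D D' : U → Set X)
    (hsep' : ∀ p : U, ∀ x ∈ D' p, ∀ y ∈ D' p, x ≠ y → 2 * c < dist x y)
    (hDD' : ∀ p : U, EMetric.hausdorffEdist (D p) (D' p) ≤ ENNReal.ofReal η)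
    (π : unitInterval → U)
    (X₀ Y₀ : X) (hXY : dist X₀ Y₀ ≤ η) :
    ∀ P Q : unitInterval → X,
      IsLift D π P → IsLift D' π Q → P 0 = X₀ → Q 0 = Y₀ →
      ∀ t : unitInterval, dist (P t) (Q t) ≤ η := by
  intro P Q hP hQ hP0 hQ0
  have hη₀ : 0 ≤ η := dist_nonneg.trans hXY
  have hgap (t : I) : dist (P t) (Q t) ∉ Ioo η (2 * c - η) :=
    dist_notMem_Ioo_of_hausdorffEDist_le (hP.2 t) (hQ.2 t) hη₀ (hDD' (π t))
      fun y hy y' hy' hne => hsep' (π t) y hy y' hy' hne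
  exact (hP.1.dist hQ.1).le_of_forall_notMem_Ioo (by linarith) hgap (y₀ := 0) (by rwa [hP0, hQ0])

/-- Abstract form of Proposition 4.11 (stability of the transport with respect to changes
in the filtering function): given two Hausdorff-continuous families `D, D'` of nonempty
`2c`-separated subsets with `hausdorffEdist (D p) (D' p) ≤ η < c` for all `p`, lifts of a
path `π` in `D` and in `D'` starting at points at distance `≤ η` stay within distance `η`
of each other; in particular their endpoints are at distance `≤ η`. -/
theorem stmt_12 {X U : Type*} [MetricSpace X] [TopologicalSpace U]
    (c : ℝ) (hc : 0 < c) (η : ℝ) (hη : η < c) (D D' : U → Set X)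
    (hne : ∀ p : U, (D p).Nonempty) (hne' : ∀ p : U, (D' p).Nonempty)
    (hsep : ∀ p : U, ∀ x ∈ D p, ∀ y ∈ D p, x ≠ y → 2 * c < dist x y)
    (hsep' : ∀ p : U, ∀ x ∈ D' p, ∀ y ∈ D' p, x ≠ y → 2 * c < dist x y)
    (hcont : ∀ p : U, ∀ ε : ℝ, 0 < ε → ∃ V ∈ nhds p, ∀ q ∈ V,
      EMetric.hausdorffEdist (D p) (D q) ≤ ENNReal.ofReal ε)
    (hcont' : ∀ p : U, ∀ ε : ℝ, 0 < ε → ∃ V ∈ nhds p, ∀ q ∈ V,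
      EMetric.hausdorffEdist (D' p) (D' q) ≤ ENNReal.ofReal ε)
    (hDD' : ∀ p : U, EMetric.hausdorffEdist (D p) (D' p) ≤ ENNReal.ofReal η)
    (π : unitInterval → U) (hπ : Continuous π)
    (X₀ Y₀ : X) (hX₀ : X₀ ∈ D (π 0)) (hY₀ : Y₀ ∈ D' (π 0)) (hXY : dist X₀ Y₀ ≤ η) :
    ∀ P Q : unitInterval → X,
      IsLift D π P → IsLift D' π Q → P 0 = X₀ → Q 0 = Y₀ →
      ∀ t : unitInterval, dist (P t) (Q t) ≤ η :=
  stmt_12_general c η hη D D' hsep' hDD' π X₀ Y₀ hXY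
end

section
/- Let M be a nonempty compact topological space and f = (f₁,f₂) : M → ℝ² continuous. Let (a,b) and (a',b') be pairs with 0 < a < 1, and suppose |a − a'| ≤ ε and |b − b'| ≤ ε where 0 < ε < min(a, 1−a). Then sup over x ∈ M of |f*₍a,b₎(x) − f*₍a',b'₎(x)| ≤ ε · (‖f‖∞ + max(a, 1−a) + |b|) / min(a·(a−ε), (1−a)·(1−a−ε)), where ‖f‖∞ := sup over x ∈ M of max(|f₁(x)|, |f₂(x)|). -/
/-!
Both branches of `f*_(a,b)` have the shape `u ↦ c (u - b) / p` with `p ∈ {a, 1 - a}` and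
`c = min a (1 - a)`, and the second branch is the first one for `(1 - a, -b)`. Over the common
denominator `p p' ≥ p (p - ε)`, the difference of two such maps is
`(u - b) (c p' - c' p) + c' p (b' - b)`, and `|c p' - c' p| ≤ |p - p'|` because `c p'` and
`c' p` are minima of two pairs of products that differ by `0` and by `p' - p`. A difference
of maxima is bounded by the larger difference of the branches, and the sup over `M` is finite
by compactness.
-/

lemma abs_min_one_sub_mul_sub_le {p p' : ℝ} (hp : 0 ≤ p) (hp' : 0 ≤ p') :
    |min p (1 - p) * p' - min p' (1 - p') * p| ≤ |p - p'| := by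
  rw [min_mul_of_nonneg _ _ hp', min_mul_of_nonneg _ _ hp]
  refine (abs_min_sub_min_le_max _ _ _ _).trans (max_le ?_ ?_)
  · rw [mul_comm, sub_self, abs_zero]
    exact abs_nonneg _
  · rw [show (1 - p) * p' - (1 - p') * p = p' - p by ring, abs_sub_comm]

lemma abs_mul_sub_div_sub_le {c c' p p' u b b' ε : ℝ} (hp : ε < p) (hpp : |p - p'| ≤ ε)
    (hc : |c * p' - c' * p| ≤ ε) (hc' : |c'| ≤ 1) (hbb : |b - b'| ≤ ε) :
    |c * ((u - b) / p) - c' * ((u - b') / p')| ≤ ε * (|u| + p + |b|) / (p * (p - ε)) := by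
  have hε : 0 ≤ ε := (abs_nonneg _).trans hpp
  have hp'ε : p - ε ≤ p' := by linarith [(abs_le.mp hpp).2]
  have hpε : 0 < p - ε := by linarith
  have hp0 : 0 < p := by linarith
  have hp'0 : 0 < p' := by linarith
  have key : c * ((u - b) / p) - c' * ((u - b') / p') =
      ((u - b) * (c * p' - c' * p) + c' * p * (b' - b)) / (p * p') := by
    field_simp
    ring
  have hnum : |(u - b) * (c * p' - c' * p) + c' * p * (b' - b)| ≤ ε * (|u| + p + |b|) :=
    calc |(u - b) * (c * p' - c' * p) + c' * p * (b' - b)|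
        ≤ |u - b| * |c * p' - c' * p| + |c'| * p * |b' - b| := by
          refine (abs_add_le _ _).trans ?_
          rw [abs_mul, abs_mul, abs_mul, abs_of_pos hp0]
      _ ≤ (|u| + |b|) * ε + 1 * p * ε := by
          rw [abs_sub_comm b']
          gcongr
          exact abs_sub _ _
      _ = ε * (|u| + p + |b|) := by ring
  rw [key, abs_div, abs_of_pos (mul_pos hp0 hp'0)]
  exact div_le_div₀ (by positivity) hnum (by positivity) (by gcongr)

lemma abs_min_one_sub_mul_div_sub_le {p p' u b b' ε : ℝ} (hε : ε < min p (1 - p))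
    (hpp : |p - p'| ≤ ε) (hbb : |b - b'| ≤ ε) :
    |min p (1 - p) * ((u - b) / p) - min p' (1 - p') * ((u - b') / p')| ≤
      ε * (|u| + p + |b|) / (p * (p - ε)) := by
  obtain ⟨hεp, hε1p⟩ := lt_min_iff.mp hε
  have hε0 : 0 ≤ ε := (abs_nonneg _).trans hpp
  obtain ⟨hpp₁, hpp₂⟩ := abs_le.mp hpp
  have hp'0 : 0 ≤ p' := by linarith
  have hp'1 : p' ≤ 1 := by linarith
  refine abs_mul_sub_div_sub_le hεp hpp ?_ ?_ hbb
  · exact (abs_min_one_sub_mul_sub_le (by linarith) hp'0).trans hpp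
  · rw [abs_of_nonneg (le_min hp'0 (sub_nonneg.mpr hp'1))]
    exact (min_le_right _ _).trans (by linarith)

lemma min_mul_sub_pos {a ε : ℝ} (hε0 : 0 ≤ ε) (hε : ε < min a (1 - a)) :
    0 < min (a * (a - ε)) ((1 - a) * (1 - a - ε)) := by
  obtain ⟨hεa, hε1a⟩ := lt_min_iff.mp hε
  exact lt_min (mul_pos (by linarith) (by linarith)) (mul_pos (by linarith) (by linarith))

lemma abs_fStar_sub_le {M : Type*} (f₁ f₂ : M → ℝ) {a b a' b' ε N : ℝ}
    (hε : ε < min a (1 - a)) (haa : |a - a'| ≤ ε) (hbb : |b - b'| ≤ ε) {x : M}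
    (hN : max |f₁ x| |f₂ x| ≤ N) :
    |fStar f₁ f₂ a b x - fStar f₁ f₂ a' b' x| ≤
      ε * (N + max a (1 - a) + |b|) / min (a * (a - ε)) ((1 - a) * (1 - a - ε)) := by
  obtain ⟨hεa, hε1a⟩ := lt_min_iff.mp hε
  have hε0 : 0 ≤ ε := (abs_nonneg _).trans haa
  obtain ⟨haa₁, haa₂⟩ := abs_le.mp haa
  have hD := min_mul_sub_pos hε0 hε
  have branch₁ := abs_min_one_sub_mul_div_sub_le (u := f₁ x) hε haa hbb
  have branch₂ := abs_min_one_sub_mul_div_sub_le (p := 1 - a) (p' := 1 - a') (u := f₂ x)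
    (b := -b) (b' := -b')
    (by rwa [sub_sub_cancel, min_comm]) (by rwa [sub_sub_sub_cancel_left, abs_sub_comm])
    (by rwa [neg_sub_neg, abs_sub_comm])
  rw [sub_sub_cancel, sub_sub_cancel, min_comm (1 - a), min_comm (1 - a'), sub_neg_eq_add,
    sub_neg_eq_add, abs_neg] at branch₂
  unfold fStar
  rw [mul_max_of_nonneg _ _ (le_min (by linarith) (by linarith)),
    mul_max_of_nonneg _ _ (le_min (by linarith) (by linarith))]
  have hN0 : 0 ≤ N := (abs_nonneg _).trans ((le_max_left _ _).trans hN)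
  have hnum : 0 ≤ ε * (N + max a (1 - a) + |b|) :=
    mul_nonneg hε0 (by linarith [abs_nonneg b, le_max_left a (1 - a)])
  refine (abs_max_sub_max_le_max _ _ _ _).trans (max_le ?_ ?_)
  · refine branch₁.trans (div_le_div₀ hnum ?_ hD (min_le_left _ _))
    gcongr
    exacts [(le_max_left _ _).trans hN, le_max_left _ _]
  · refine branch₂.trans (div_le_div₀ hnum ?_ hD (min_le_right _ _))
    gcongr
    exacts [(le_max_right _ _).trans hN, le_max_right _ _]

theorem stmt_15_general {M : Type*} [TopologicalSpace M] [CompactSpace M]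
    (f₁ f₂ : M → ℝ) (hf₁ : Continuous f₁) (hf₂ : Continuous f₂)
    (a b a' b' ε : ℝ) (hε : ε < min a (1 - a))
    (haa : |a - a'| ≤ ε) (hbb : |b - b'| ≤ ε) :
    (⨆ x : M, |fStar f₁ f₂ a b x - fStar f₁ f₂ a' b' x|) ≤
      ε * ((⨆ x : M, max |f₁ x| |f₂ x|) + max a (1 - a) + |b|) /
        min (a * (a - ε)) ((1 - a) * (1 - a - ε)) := by
  have hbdd : BddAbove (Set.range fun x ↦ max |f₁ x| |f₂ x|) :=
    (isCompact_range (hf₁.abs.max hf₂.abs)).bddAbove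
  refine Real.iSup_le (fun x ↦ abs_fStar_sub_le f₁ f₂ hε haa hbb (le_ciSup hbdd x)) ?_
  have hε0 : 0 ≤ ε := (abs_nonneg _).trans haa
  have hsup : 0 ≤ ⨆ x : M, max |f₁ x| |f₂ x| :=
    Real.iSup_nonneg fun x ↦ (abs_nonneg _).trans (le_max_left _ _)
  have ha : 0 ≤ max a (1 - a) := le_max_of_le_left (hε0.trans (lt_min_iff.mp hε).1.le)
  exact div_nonneg (by positivity) (min_mul_sub_pos hε0 hε).le

/-- Proposition 4.5 (sup-norm estimate from Theorem 4.5 of [CeDi*13]): if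
`|a − a'| ≤ ε` and `|b − b'| ≤ ε` with `0 < ε < min a (1−a)`, then
`‖f*_(a,b) − f*_(a',b')‖∞ ≤ ε (‖f‖∞ + max a (1−a) + |b|) / min (a(a−ε)) ((1−a)(1−a−ε))`. -/
theorem stmt_15 {M : Type*} [TopologicalSpace M] [CompactSpace M] [Nonempty M]
    (f₁ f₂ : M → ℝ) (hf₁ : Continuous f₁) (hf₂ : Continuous f₂)
    (a b a' b' ε : ℝ) (ha0 : 0 < a) (ha1 : a < 1)
    (hε0 : 0 < ε) (hε : ε < min a (1 - a))
    (haa : |a - a'| ≤ ε) (hbb : |b - b'| ≤ ε) :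
    (⨆ x : M, |fStar f₁ f₂ a b x - fStar f₁ f₂ a' b' x|) ≤
      ε * ((⨆ x : M, max |f₁ x| |f₂ x|) + max a (1 - a) + |b|) /
        min (a * (a - ε)) ((1 - a) * (1 - a - ε)) :=
  stmt_15_general f₁ f₂ hf₁ hf₂ a b a' b' ε hε haa hbb
end
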